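/- arXiv:2512.18335 — 10 statements merged into one kernel-verified Lean document; each statement's English description precedes it below -/
import Mathlib

section
/- Let X be a finite subset of α with n = |X| ≥ 1. Let X⁺ ⊆ α be a set with |X⁺| ≤ 1 and X⁺ ∩ X = ∅, and let X⁻ ⊆ X be a set with |X⁻| ≤ 1. Set X' = (X \ X⁻) ∪ X⁺. Then |L(X) \ L(X')| ≤ 1 and |R(X) \ R(X')| ≤ 1, and also |L(X') \ L(X)| ≤ 1 and |R(X') \ R(X)| ≤ 1. -/
open Finset

/-- Median index `I(n) = ⌈n/2⌉`. -/
def medianIdx (n : ℕ) : ℕ := (n + 1) / 2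

/-- 1-indexed rank of `x` in `X`: the number of elements of `X` that are `≤ x`.
For `x ∈ X`, `rank X x = i` means `x` is the `i`-th smallest element of `X`. -/
def rank {α : Type*} [LinearOrder α] (X : Finset α) (x : α) : ℕ :=
  (X.filter (fun y => y ≤ x)).card

/-- Left part of the median partition: elements of rank `< I(|X|)`. -/
def medL {α : Type*} [LinearOrder α] (X : Finset α) : Finset α :=
  X.filter (fun x => rank X x < medianIdx X.card)

/-- Right part of the median partition: elements of rank `≥ I(|X|)`. -/
def medR {α : Type*} [LinearOrder α] (X : Finset α) : Finset α :=
  X.filter (fun x => medianIdx X.card ≤ rank X x)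

section Aux

variable {α : Type*} [LinearOrder α]

lemma rank_mono (X : Finset α) {a b : α} (hab : a ≤ b) : rank X a ≤ rank X b := by
  apply Finset.card_le_card
  intro x hx
  simp only [Finset.mem_filter] at hx ⊢
  exact ⟨hx.1, hx.2.trans hab⟩

lemma rank_lt_rank (X : Finset α) {a b : α} (hb : b ∈ X) (hab : a < b) :
    rank X a < rank X b := by
  apply Finset.card_lt_card
  constructor
  · intro x hx
    simp only [Finset.mem_filter] at hx ⊢
    exact ⟨hx.1, hx.2.trans hab.le⟩
  · intro h
    have hbmem : b ∈ X.filter (fun y => y ≤ a) := h (Finset.mem_filter.mpr ⟨hb, le_refl b⟩)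
    simp only [Finset.mem_filter] at hbmem
    exact absurd hbmem.2 (not_le.mpr hab)

lemma rank_le_card' (X : Finset α) (a : α) : rank X a ≤ X.card :=
  Finset.card_le_card (Finset.filter_subset _ _)

lemma one_le_rank (X : Finset α) {a : α} (ha : a ∈ X) : 1 ≤ rank X a :=
  Finset.card_pos.mpr ⟨a, Finset.mem_filter.mpr ⟨ha, le_refl a⟩⟩

lemma filter_sdiff_eq (X Xm : Finset α) (p : α → Prop) [DecidablePred p] :
    (X \ Xm).filter p = X.filter p \ Xm.filter p := by
  ext x
  simp only [Finset.mem_filter, Finset.mem_sdiff]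
  tauto

lemma rank_update (X Xp Xm : Finset α) (hpdisj : Xp ∩ X = ∅) (hmsub : Xm ⊆ X) (b : α) :
    rank ((X \ Xm) ∪ Xp) b + rank Xm b = rank X b + rank Xp b := by
  classical
  unfold rank
  rw [Finset.filter_union, filter_sdiff_eq,
    Finset.card_union_of_disjoint, Finset.card_sdiff_of_subset]
  · have h1 : (Xm.filter (fun y => y ≤ b)).card ≤ (X.filter (fun y => y ≤ b)).card :=
      Finset.card_le_card (Finset.filter_subset_filter _ hmsub)
    omega
  · exact Finset.filter_subset_filter _ hmsub
  · rw [Finset.disjoint_left]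
    intro x hx hx'
    simp only [Finset.mem_sdiff, Finset.mem_filter] at hx hx'
    have : x ∈ Xp ∩ X := Finset.mem_inter.mpr ⟨hx'.1, hx.1.1⟩
    rw [hpdisj] at this
    exact absurd this (Finset.notMem_empty x)

lemma card_update (X Xp Xm : Finset α) (hpdisj : Xp ∩ X = ∅) (hmsub : Xm ⊆ X) :
    ((X \ Xm) ∪ Xp).card + Xm.card = X.card + Xp.card := by
  classical
  rw [Finset.card_union_of_disjoint, Finset.card_sdiff_of_subset hmsub]
  · have := Finset.card_le_card hmsub
    omega
  · rw [Finset.disjoint_left]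
    intro x hx hx'
    have : x ∈ Xp ∩ X := Finset.mem_inter.mpr ⟨hx', (Finset.mem_sdiff.mp hx).1⟩
    rw [hpdisj] at this
    exact absurd this (Finset.notMem_empty x)

lemma keyL_aux (X Xp Xm : Finset α) (hpcard : Xp.card ≤ 1) (hpdisj : Xp ∩ X = ∅)
    (hmsub : Xm ⊆ X) (hmcard : Xm.card ≤ 1) {a b : α}
    (ha : a ∈ medL X \ medL ((X \ Xm) ∪ Xp))
    (hb : b ∈ medL X \ medL ((X \ Xm) ∪ Xp)) (hab : a < b) : False := by
  classical
  set X' := (X \ Xm) ∪ Xp with hX'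
  simp only [Finset.mem_sdiff, medL, Finset.mem_filter, not_and, not_lt] at ha hb
  obtain ⟨⟨haX, haL⟩, haNL⟩ := ha
  obtain ⟨⟨hbX, hbL⟩, hbNL⟩ := hb
  have hcard := card_update X Xp Xm hpdisj hmsub
  have hra := rank_update X Xp Xm hpdisj hmsub a
  have hrb := rank_update X Xp Xm hpdisj hmsub b
  rw [← hX'] at hcard hra hrb
  have hrab : rank X a < rank X b := rank_lt_rank X hbX hab
  have hma : rank Xm a ≤ rank Xm b := rank_mono Xm hab.le
  have hmb : rank Xm b ≤ Xm.card := rank_le_card' Xm b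
  have hpa : rank Xp a ≤ rank Xp b := rank_mono Xp hab.le
  have hpb : rank Xp b ≤ Xp.card := rank_le_card' Xp b
  have hda : a ∈ Xm ∨ (a ∈ X' ∧ medianIdx X'.card ≤ rank X' a) := by
    by_cases h : a ∈ X'
    · exact Or.inr ⟨h, haNL h⟩
    · left
      by_contra hm
      exact h (Finset.mem_union_left _ (Finset.mem_sdiff.mpr ⟨haX, hm⟩))
  have hdb : b ∈ Xm ∨ (b ∈ X' ∧ medianIdx X'.card ≤ rank X' b) := by
    by_cases h : b ∈ X'
    · exact Or.inr ⟨h, hbNL h⟩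
    · left
      by_contra hm
      exact h (Finset.mem_union_left _ (Finset.mem_sdiff.mpr ⟨hbX, hm⟩))
  rcases hda with hda | ⟨haX', hra'⟩ <;> rcases hdb with hdb | ⟨hbX', hrb'⟩
  · exact absurd (Finset.card_le_one.mp hmcard a hda b hdb) hab.ne
  · have h1 : 1 ≤ rank Xm a := one_le_rank Xm hda
    simp only [medianIdx] at *
    omega
  · have h1 : rank Xm a < rank Xm b := rank_lt_rank Xm hdb hab
    simp only [medianIdx] at *
    omega
  · have h1 : rank X' a < rank X' b := rank_lt_rank X' hbX' hab
    simp only [medianIdx] at *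
    omega

lemma keyR_aux (X Xp Xm : Finset α) (hpcard : Xp.card ≤ 1) (hpdisj : Xp ∩ X = ∅)
    (hmsub : Xm ⊆ X) (hmcard : Xm.card ≤ 1) {a b : α}
    (ha : a ∈ medR X \ medR ((X \ Xm) ∪ Xp))
    (hb : b ∈ medR X \ medR ((X \ Xm) ∪ Xp)) (hab : a < b) : False := by
  classical
  set X' := (X \ Xm) ∪ Xp with hX'
  simp only [Finset.mem_sdiff, medR, Finset.mem_filter, not_and, not_le] at ha hb
  obtain ⟨⟨haX, haR⟩, haNR⟩ := ha
  obtain ⟨⟨hbX, hbR⟩, hbNR⟩ := hb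
  have hcard := card_update X Xp Xm hpdisj hmsub
  have hra := rank_update X Xp Xm hpdisj hmsub a
  have hrb := rank_update X Xp Xm hpdisj hmsub b
  rw [← hX'] at hcard hra hrb
  have hrab : rank X a < rank X b := rank_lt_rank X hbX hab
  have hma : rank Xm a ≤ rank Xm b := rank_mono Xm hab.le
  have hmb : rank Xm b ≤ Xm.card := rank_le_card' Xm b
  have hpa : rank Xp a ≤ rank Xp b := rank_mono Xp hab.le
  have hpb : rank Xp b ≤ Xp.card := rank_le_card' Xp b
  have hda : a ∈ Xm ∨ (a ∈ X' ∧ rank X' a < medianIdx X'.card) := by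
    by_cases h : a ∈ X'
    · exact Or.inr ⟨h, haNR h⟩
    · left
      by_contra hm
      exact h (Finset.mem_union_left _ (Finset.mem_sdiff.mpr ⟨haX, hm⟩))
  have hdb : b ∈ Xm ∨ (b ∈ X' ∧ rank X' b < medianIdx X'.card) := by
    by_cases h : b ∈ X'
    · exact Or.inr ⟨h, hbNR h⟩
    · left
      by_contra hm
      exact h (Finset.mem_union_left _ (Finset.mem_sdiff.mpr ⟨hbX, hm⟩))
  rcases hda with hda | ⟨haX', hra'⟩ <;> rcases hdb with hdb | ⟨hbX', hrb'⟩
  · exact absurd (Finset.card_le_one.mp hmcard a hda b hdb) hab.ne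
  · have h1 : 1 ≤ rank Xm a := one_le_rank Xm hda
    simp only [medianIdx] at *
    omega
  · have h1 : rank Xm a < rank Xm b := rank_lt_rank Xm hdb hab
    simp only [medianIdx] at *
    omega
  · have h1 : rank X' a < rank X' b := rank_lt_rank X' hbX' hab
    simp only [medianIdx] at *
    omega

lemma keyL (X Xp Xm : Finset α) (hpcard : Xp.card ≤ 1) (hpdisj : Xp ∩ X = ∅)
    (hmsub : Xm ⊆ X) (hmcard : Xm.card ≤ 1) :
    (medL X \ medL ((X \ Xm) ∪ Xp)).card ≤ 1 := by
  rw [Finset.card_le_one]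
  intro a ha b hb
  by_contra hne
  rcases lt_or_gt_of_ne hne with h | h
  · exact keyL_aux X Xp Xm hpcard hpdisj hmsub hmcard ha hb h
  · exact keyL_aux X Xp Xm hpcard hpdisj hmsub hmcard hb ha h

lemma keyR (X Xp Xm : Finset α) (hpcard : Xp.card ≤ 1) (hpdisj : Xp ∩ X = ∅)
    (hmsub : Xm ⊆ X) (hmcard : Xm.card ≤ 1) :
    (medR X \ medR ((X \ Xm) ∪ Xp)).card ≤ 1 := by
  rw [Finset.card_le_one]
  intro a ha b hb
  by_contra hne
  rcases lt_or_gt_of_ne hne with h | h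
  · exact keyR_aux X Xp Xm hpcard hpdisj hmsub hmcard ha hb h
  · exact keyR_aux X Xp Xm hpcard hpdisj hmsub hmcard hb ha h

end Aux

theorem median_partition_stability {α : Type*} [LinearOrder α]
    (X Xp Xm : Finset α) (hn : 1 ≤ X.card)
    (hpcard : Xp.card ≤ 1) (hpdisj : Xp ∩ X = ∅)
    (hmsub : Xm ⊆ X) (hmcard : Xm.card ≤ 1)
    (X' : Finset α) (hX' : X' = (X \ Xm) ∪ Xp) :
    (medL X \ medL X').card ≤ 1 ∧ (medR X \ medR X').card ≤ 1 ∧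
    (medL X' \ medL X).card ≤ 1 ∧ (medR X' \ medR X).card ≤ 1 := by
  classical
  subst hX'
  have hpd : ∀ x, x ∈ Xp → x ∉ X := by
    intro x hx hxX
    have : x ∈ Xp ∩ X := Finset.mem_inter.mpr ⟨hx, hxX⟩
    rw [hpdisj] at this
    exact absurd this (Finset.notMem_empty x)
  have hmd : Xm ∩ ((X \ Xm) ∪ Xp) = ∅ := by
    ext x
    simp only [Finset.mem_inter, Finset.mem_union, Finset.mem_sdiff, Finset.notMem_empty,
      iff_false]
    rintro ⟨hx, ⟨_, h2⟩ | h2⟩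
    · exact h2 hx
    · exact hpd x h2 (hmsub hx)
  have hps : Xp ⊆ (X \ Xm) ∪ Xp := Finset.subset_union_right
  have hrev : ((((X \ Xm) ∪ Xp) \ Xp) ∪ Xm) = X := by
    ext x
    simp only [Finset.mem_union, Finset.mem_sdiff]
    constructor
    · rintro (⟨(⟨h1, _⟩ | h1), h2⟩ | h1)
      · exact h1
      · exact absurd h1 h2
      · exact hmsub h1
    · intro hx
      by_cases hm : x ∈ Xm
      · exact Or.inr hm
      · exact Or.inl ⟨Or.inl ⟨hx, hm⟩, fun h => hpd x h hx⟩
  have h1 := keyL X Xp Xm hpcard hpdisj hmsub hmcard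
  have h2 := keyR X Xp Xm hpcard hpdisj hmsub hmcard
  have h3 := keyL ((X \ Xm) ∪ Xp) Xm Xp hmcard hmd hps hpcard
  have h4 := keyR ((X \ Xm) ∪ Xp) Xm Xp hmcard hmd hps hpcard
  rw [hrev] at h3 h4
  exact ⟨h1, h2, h3, h4⟩
end

section
/- Let X be a finite subset of α with n = |X| ≥ 1 and let x⁻ ∈ X. Set X' = X \ {x⁻}. Then |L(X) \ L(X')| ≤ 1, |R(X) \ R(X')| ≤ 1, |L(X') \ L(X)| ≤ 1, and |R(X') \ R(X)| ≤ 1. -/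
open Finset

lemma rank_strict {α : Type*} [LinearOrder α] (X : Finset α) {x y : α}
    (hy : y ∈ X) (hxy : x < y) : rank X x < rank X y := by
  apply Finset.card_lt_card
  have hsub : X.filter (fun z => z ≤ x) ⊆ X.filter (fun z => z ≤ y) := by
    intro z hz
    rw [Finset.mem_filter] at *
    exact ⟨hz.1, hz.2.trans hxy.le⟩
  rw [Finset.ssubset_iff_of_subset hsub]
  exact ⟨y, by simp [hy], by simp [not_le.2 hxy]⟩

lemma rank_inj {α : Type*} [LinearOrder α] (X : Finset α) {x y : α}
    (hx : x ∈ X) (hy : y ∈ X) (h : rank X x = rank X y) : x = y := by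
  rcases lt_trichotomy x y with hlt | heq | hgt
  · exact absurd h (rank_strict X hy hlt).ne
  · exact heq
  · exact absurd h.symm (rank_strict X hx hgt).ne

theorem median_partition_stability_delete {α : Type*} [LinearOrder α]
    (X : Finset α) (hn : 1 ≤ X.card)
    (xm : α) (hxm : xm ∈ X)
    (X' : Finset α) (hX' : X' = X \ {xm}) :
    (medL X \ medL X').card ≤ 1 ∧ (medR X \ medR X').card ≤ 1 ∧
    (medL X' \ medL X).card ≤ 1 ∧ (medR X' \ medR X).card ≤ 1 := by
  subst hX'
  have hxmY : xm ∉ X \ {xm} := by simp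
  have hins : insert xm (X \ {xm}) = X := by
    rw [Finset.sdiff_singleton_eq_erase, Finset.insert_erase hxm]
  have hYsub : X \ {xm} ⊆ X := Finset.sdiff_subset
  have hcard : X.card = (X \ {xm}).card + 1 := by
    have := Finset.card_sdiff_of_subset (by simpa using hxm : {xm} ⊆ X)
    simp at this
    omega
  set I := medianIdx X.card with hI
  set I' := medianIdx (X \ {xm}).card with hI'
  have hII1 : I' ≤ I := by
    rw [hI, hI', medianIdx, medianIdx, hcard]; omega
  have hII2 : I ≤ I' + 1 := by
    rw [hI, hI', medianIdx, medianIdx, hcard]; omega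
  have hrank : ∀ x ∈ X \ {xm},
      rank X x = rank (X \ {xm}) x + (if xm ≤ x then 1 else 0) := by
    intro x hx
    rw [rank]
    conv_lhs => rw [← hins]
    rw [Finset.filter_insert]
    split
    · rw [Finset.card_insert_of_notMem (fun h => hxmY (Finset.mem_filter.1 h).1)]
      simp [rank]
    · simp [rank]
  have memY : ∀ x, x ∈ X \ {xm} ↔ x ∈ X ∧ x ≠ xm := by
    intro x; simp [Finset.mem_sdiff]
  refine ⟨?_, ?_, ?_, ?_⟩
  · -- medL X \ medL X'
    rw [Finset.card_le_one]
    have key : ∀ a ∈ medL X \ medL (X \ {xm}),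
        (a = xm ∧ rank X xm < I) ∨ (rank X a = I' ∧ a < xm ∧ I = I' + 1) := by
      intro a ha
      rw [Finset.mem_sdiff, medL, medL, Finset.mem_filter, Finset.mem_filter] at ha
      obtain ⟨⟨haX, har⟩, hnot⟩ := ha
      by_cases haxm : a = xm
      · exact Or.inl ⟨haxm, haxm ▸ har⟩
      · have haY : a ∈ X \ {xm} := (memY a).2 ⟨haX, haxm⟩
        have h2 : ¬ rank (X \ {xm}) a < I' := fun h => hnot ⟨haY, h⟩
        have h3 := hrank a haY
        by_cases hle : xm ≤ a
        · simp [hle] at h3; omega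
        · simp [hle] at h3
          refine Or.inr ⟨by omega, not_le.1 hle, by omega⟩
    intro a ha b hb
    rcases key a ha with ⟨rfl, h1⟩ | ⟨h1, h1', h1''⟩ <;>
      rcases key b hb with ⟨rfl, h2⟩ | ⟨h2, h2', h2''⟩
    · rfl
    · have := rank_strict X hxm h2'; omega
    · have := rank_strict X hxm h1'; omega
    · exact rank_inj X (Finset.mem_of_mem_filter a (Finset.mem_sdiff.1 ha).1)
        (Finset.mem_of_mem_filter b (Finset.mem_sdiff.1 hb).1) (h1.trans h2.symm)
  · -- medR X \ medR X'
    rw [Finset.card_le_one]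
    have key : ∀ a ∈ medR X \ medR (X \ {xm}),
        (a = xm ∧ I ≤ rank X xm) ∨ (rank X a = I ∧ xm < a) := by
      intro a ha
      rw [Finset.mem_sdiff, medR, medR, Finset.mem_filter, Finset.mem_filter] at ha
      obtain ⟨⟨haX, har⟩, hnot⟩ := ha
      by_cases haxm : a = xm
      · exact Or.inl ⟨haxm, haxm ▸ har⟩
      · have haY : a ∈ X \ {xm} := (memY a).2 ⟨haX, haxm⟩
        have h2 : ¬ I' ≤ rank (X \ {xm}) a := fun h => hnot ⟨haY, h⟩
        have h3 := hrank a haY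
        by_cases hle : xm ≤ a
        · simp [hle] at h3
          exact Or.inr ⟨by omega, lt_of_le_of_ne hle (Ne.symm haxm)⟩
        · simp [hle] at h3; omega
    intro a ha b hb
    rcases key a ha with ⟨rfl, h1⟩ | ⟨h1, h1'⟩ <;>
      rcases key b hb with ⟨rfl, h2⟩ | ⟨h2, h2'⟩
    · rfl
    · have hbX : b ∈ X := Finset.mem_of_mem_filter b (Finset.mem_sdiff.1 hb).1
      have := rank_strict X hbX h2'; omega
    · have haX : a ∈ X := Finset.mem_of_mem_filter a (Finset.mem_sdiff.1 ha).1
      have := rank_strict X haX h1'; omega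
    · exact rank_inj X (Finset.mem_of_mem_filter a (Finset.mem_sdiff.1 ha).1)
        (Finset.mem_of_mem_filter b (Finset.mem_sdiff.1 hb).1) (h1.trans h2.symm)
  · -- medL X' \ medL X
    rw [Finset.card_le_one]
    have key : ∀ a ∈ medL (X \ {xm}) \ medL X, rank X a = I ∧ a ∈ X := by
      intro a ha
      rw [Finset.mem_sdiff, medL, medL, Finset.mem_filter, Finset.mem_filter] at ha
      obtain ⟨⟨haY, har⟩, hnot⟩ := ha
      have haX : a ∈ X := hYsub haY
      have h2 : ¬ rank X a < I := fun h => hnot ⟨haX, h⟩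
      have h3 := hrank a haY
      by_cases hle : xm ≤ a <;> simp [hle] at h3 <;>
        exact ⟨by omega, haX⟩
    intro a ha b hb
    exact rank_inj X (key a ha).2 (key b hb).2 ((key a ha).1.trans (key b hb).1.symm)
  · -- medR X' \ medR X
    rw [Finset.card_le_one]
    have key : ∀ a ∈ medR (X \ {xm}) \ medR X, rank X a = I' ∧ a ∈ X := by
      intro a ha
      rw [Finset.mem_sdiff, medR, medR, Finset.mem_filter, Finset.mem_filter] at ha
      obtain ⟨⟨haY, har⟩, hnot⟩ := ha
      have haX : a ∈ X := hYsub haY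
      have h2 : ¬ I ≤ rank X a := fun h => hnot ⟨haX, h⟩
      have h3 := hrank a haY
      by_cases hle : xm ≤ a <;> simp [hle] at h3 <;>
        exact ⟨by omega, haX⟩
    intro a ha b hb
    exact rank_inj X (key a ha).2 (key b hb).2 ((key a ha).1.trans (key b hb).1.symm)
end

section
/- Let X be a finite subset of α with n = |X| ≥ 1, let x⁺ ∈ α with x⁺ ∉ X, and let x⁻ ∈ X. Set X' = (X \ {x⁻}) ∪ {x⁺}, so |X'| = |X|. Then |L(X) \ L(X')| ≤ 1, |R(X) \ R(X')| ≤ 1, |L(X') \ L(X)| ≤ 1, and |R(X') \ R(X)| ≤ 1. -/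
open Finset

section Aux

variable {α : Type*} [LinearOrder α]

lemma rank_lt_rank_of_lt {X : Finset α} {a b : α} (hb : b ∈ X) (h : a < b) :
    rank X a < rank X b := by
  apply Finset.card_lt_card
  have hsub : X.filter (fun y => y ≤ a) ⊆ X.filter (fun y => y ≤ b) := by
    intro y hy
    rw [Finset.mem_filter] at hy ⊢
    exact ⟨hy.1, hy.2.trans h.le⟩
  rw [Finset.ssubset_iff_of_subset hsub]
  exact ⟨b, Finset.mem_filter.mpr ⟨hb, le_refl b⟩,
    fun hmem => absurd (Finset.mem_filter.mp hmem).2 (not_le.mpr h)⟩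

lemma rank_inj_s3 {X : Finset α} {a b : α} (ha : a ∈ X) (hb : b ∈ X)
    (h : rank X a = rank X b) : a = b := by
  rcases lt_trichotomy a b with h' | h' | h'
  · exact absurd h (rank_lt_rank_of_lt hb h').ne
  · exact h'
  · exact absurd h.symm (rank_lt_rank_of_lt ha h').ne

lemma rank_insert {X : Finset α} {a : α} (ha : a ∉ X) (y : α) :
    rank (insert a X) y = rank X y + (if a ≤ y then 1 else 0) := by
  unfold rank
  rw [Finset.filter_insert]
  split
  · rw [Finset.card_insert_of_notMem (fun h => ha (Finset.mem_filter.mp h).1)]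
  · rw [Nat.add_zero]

lemma median_stab_aux (Y : Finset α) (u v : α) (hu : u ∉ Y) (hv : v ∉ Y) :
    (medL (insert u Y) \ medL (insert v Y)).card ≤ 1 ∧
    (medR (insert u Y) \ medR (insert v Y)).card ≤ 1 := by
  set S := insert u Y with hS
  set T := insert v Y with hT
  have hcS : S.card = Y.card + 1 := Finset.card_insert_of_notMem hu
  have hcT : T.card = Y.card + 1 := Finset.card_insert_of_notMem hv
  set I := medianIdx (Y.card + 1) with hI
  have hmedS : medianIdx S.card = I := by rw [hcS]
  have hmedT : medianIdx T.card = I := by rw [hcT]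
  have hrS : ∀ y, rank S y = rank Y y + (if u ≤ y then 1 else 0) := rank_insert hu
  have hrT : ∀ y, rank T y = rank Y y + (if v ≤ y then 1 else 0) := rank_insert hv
  have memL : ∀ a, a ∈ medL S ↔ a ∈ S ∧ rank S a < I := by
    intro a; rw [medL, Finset.mem_filter, hmedS]
  have memLT : ∀ a, a ∈ medL T ↔ a ∈ T ∧ rank T a < I := by
    intro a; rw [medL, Finset.mem_filter, hmedT]
  have memR : ∀ a, a ∈ medR S ↔ a ∈ S ∧ I ≤ rank S a := by
    intro a; rw [medR, Finset.mem_filter, hmedS]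
  have memRT : ∀ a, a ∈ medR T ↔ a ∈ T ∧ I ≤ rank T a := by
    intro a; rw [medR, Finset.mem_filter, hmedT]
  have charL : ∀ a ∈ medL S \ medL T, a = u ∨ (a ∈ Y ∧ a < u ∧ rank S a + 1 = I) := by
    intro a ha
    obtain ⟨haS, hnT⟩ := Finset.mem_sdiff.mp ha
    obtain ⟨haS, hra⟩ := (memL a).mp haS
    by_cases hau : a = u
    · exact Or.inl hau
    have haY : a ∈ Y := by
      rcases Finset.mem_insert.mp haS with h | h
      · exact absurd h hau
      · exact h
    have haT : a ∈ T := Finset.mem_insert_of_mem haY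
    have hrt : I ≤ rank T a := by
      by_contra h
      exact hnT ((memLT a).mpr ⟨haT, not_le.mp h⟩)
    have heqS := hrS a
    have heqT := hrT a
    have h1 : ¬ u ≤ a := by
      intro h
      rw [heqS, if_pos h] at hra
      have : rank T a ≤ rank Y a + 1 := by rw [heqT]; split <;> omega
      omega
    refine Or.inr ⟨haY, not_le.mp h1, ?_⟩
    rw [heqS, if_neg h1] at hra ⊢
    have : rank T a ≤ rank Y a + 1 := by rw [heqT]; split <;> omega
    omega
  have charR : ∀ a ∈ medR S \ medR T, a = u ∨ (a ∈ Y ∧ u ≤ a ∧ rank S a = I) := by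
    intro a ha
    obtain ⟨haS, hnT⟩ := Finset.mem_sdiff.mp ha
    obtain ⟨haS, hra⟩ := (memR a).mp haS
    by_cases hau : a = u
    · exact Or.inl hau
    have haY : a ∈ Y := by
      rcases Finset.mem_insert.mp haS with h | h
      · exact absurd h hau
      · exact h
    have haT : a ∈ T := Finset.mem_insert_of_mem haY
    have hrt : rank T a < I := by
      by_contra h
      exact hnT ((memRT a).mpr ⟨haT, not_lt.mp h⟩)
    have heqS := hrS a
    have heqT := hrT a
    have h1 : u ≤ a := by
      by_contra h
      rw [heqS, if_neg h] at hra
      have : rank Y a ≤ rank T a := by rw [heqT]; split <;> omega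
      omega
    refine Or.inr ⟨haY, h1, ?_⟩
    rw [heqS, if_pos h1] at hra ⊢
    have : rank Y a ≤ rank T a := by rw [heqT]; split <;> omega
    omega
  constructor
  · rw [Finset.card_le_one]
    intro a ha b hb
    have hca := charL a ha
    have hcb := charL b hb
    have haL := (memL a).mp (Finset.mem_sdiff.mp ha).1
    have hbL := (memL b).mp (Finset.mem_sdiff.mp hb).1
    rcases hca with hau | ⟨haY, hau, hra⟩
    · rcases hcb with hbu | ⟨hbY, hbu, hrb⟩
      · rw [hau, hbu]
      · exfalso
        have hba : b < a := by rw [hau]; exact hbu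
        have hlt : rank S b < rank S a := rank_lt_rank_of_lt haL.1 hba
        omega
    · rcases hcb with hbu | ⟨hbY, hbu, hrb⟩
      · exfalso
        have hab : a < b := by rw [hbu]; exact hau
        have hlt : rank S a < rank S b := rank_lt_rank_of_lt hbL.1 hab
        omega
      · exact rank_inj_s3 (X := S) (Finset.mem_insert_of_mem haY)
          (Finset.mem_insert_of_mem hbY) (by omega)
  · rw [Finset.card_le_one]
    intro a ha b hb
    have hca := charR a ha
    have hcb := charR b hb
    have haR := (memR a).mp (Finset.mem_sdiff.mp ha).1
    have hbR := (memR b).mp (Finset.mem_sdiff.mp hb).1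
    rcases hca with hau | ⟨haY, hau, hra⟩
    · rcases hcb with hbu | ⟨hbY, hbu, hrb⟩
      · rw [hau, hbu]
      · exfalso
        have hne : b ≠ u := fun h' => hu (h' ▸ hbY)
        have hab : a < b := by rw [hau]; exact lt_of_le_of_ne hbu hne.symm
        have hlt : rank S a < rank S b :=
          rank_lt_rank_of_lt (Finset.mem_insert_of_mem hbY : b ∈ S) hab
        omega
    · rcases hcb with hbu | ⟨hbY, hbu, hrb⟩
      · exfalso
        have hne : a ≠ u := fun h' => hu (h' ▸ haY)
        have hba : b < a := by rw [hbu]; exact lt_of_le_of_ne hau hne.symm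
        have hlt : rank S b < rank S a :=
          rank_lt_rank_of_lt (Finset.mem_insert_of_mem haY : a ∈ S) hba
        omega
      · exact rank_inj_s3 (X := S) (Finset.mem_insert_of_mem haY)
          (Finset.mem_insert_of_mem hbY) (by omega)

end Aux

theorem median_partition_stability_replace {α : Type*} [LinearOrder α]
    (X : Finset α) (hn : 1 ≤ X.card)
    (xp : α) (hxp : xp ∉ X) (xm : α) (hxm : xm ∈ X)
    (X' : Finset α) (hX' : X' = (X \ {xm}) ∪ {xp}) :
    (medL X \ medL X').card ≤ 1 ∧ (medR X \ medR X').card ≤ 1 ∧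
    (medL X' \ medL X).card ≤ 1 ∧ (medR X' \ medR X).card ≤ 1 := by
  set Y := X.erase xm with hY
  have hXY : X = insert xm Y := (Finset.insert_erase hxm).symm
  have hX'Y : X' = insert xp Y := by
    rw [hX']
    ext y
    simp only [Finset.mem_union, Finset.mem_sdiff, Finset.mem_singleton,
      Finset.mem_insert, hY, Finset.mem_erase]
    tauto
  have hmY : xm ∉ Y := Finset.notMem_erase _ _
  have hpY : xp ∉ Y := fun h => hxp (Finset.mem_of_mem_erase h)
  obtain ⟨g1, g2⟩ := median_stab_aux Y xm xp hmY hpY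
  obtain ⟨g3, g4⟩ := median_stab_aux Y xp xm hpY hmY
  rw [hXY, hX'Y]
  exact ⟨g1, g2, g3, g4⟩
end

section
/- Let X be a finite subset of α with n = |X| ≥ 1 and write I = I(n). Let x⁺ ∈ α with x⁺ ∉ X and let x⁻ ∈ X, and suppose x⁺ < x_(I) and x⁻ < x_(I). Set X' = (X \ {x⁻}) ∪ {x⁺}, so |X'| = n and the median index is unchanged. Then L(X') = ({x⁺} ∪ L(X)) \ {x⁻} and R(X') = R(X). -/
open Finset

/-!
Replacing one element below the median element `x_(I)` by another one below it keeps the size of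
the set and the rank of `x_(I)`. Relative to a median element, `L` is the set of elements below it
and `R` the set of elements above it (inclusive), so both parts of `X'` are read off from `X` by
plain set algebra.
-/

section Rank

variable {α : Type*} [LinearOrder α]

lemma rank_mono_s8 (Y : Finset α) : Monotone (rank Y) :=
  fun _ _ h => card_le_card (monotone_filter_right Y fun _ _ ha => ha.trans h)

lemma rank_lt_rank_s8 {Y : Finset α} {y z : α} (hz : z ∈ Y) (h : y < z) : rank Y y < rank Y z := by
  refine card_lt_card ((ssubset_iff_of_subset ?_).2 ⟨z, ?_, ?_⟩)
  · exact monotone_filter_right Y fun _ _ ha => ha.trans h.le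
  · exact mem_filter.2 ⟨hz, le_rfl⟩
  · simpa using fun _ => h

lemma rank_lt_rank_iff {Y : Finset α} {y z : α} (hz : z ∈ Y) : rank Y y < rank Y z ↔ y < z :=
  ⟨(rank_mono_s8 Y).reflect_lt, rank_lt_rank_s8 hz⟩

lemma rank_insert_of_le {Y : Finset α} {a x : α} (ha : a ∉ Y) (hax : a ≤ x) :
    rank (insert a Y) x = rank Y x + 1 := by
  rw [rank, filter_insert, if_pos hax, card_insert_of_notMem fun h => ha (mem_filter.1 h).1, rank]

lemma rank_erase_of_le {Y : Finset α} {a x : α} (ha : a ∈ Y) (hax : a ≤ x) :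
    rank (Y.erase a) x + 1 = rank Y x := by
  have ha' : a ∈ Y.filter (· ≤ x) := mem_filter.2 ⟨ha, hax⟩
  rw [rank, filter_erase, card_erase_add_one ha', rank]

lemma rank_insert_erase_of_le {Y : Finset α} {a b x : α} (ha : a ∉ Y) (hb : b ∈ Y)
    (hax : a ≤ x) (hbx : b ≤ x) : rank (insert a (Y.erase b)) x = rank Y x := by
  rw [rank_insert_of_le (fun h => ha (mem_of_mem_erase h)) hax, rank_erase_of_le hb hbx]

end Rank

section MedianPartition

variable {α : Type*} [LinearOrder α] {Y : Finset α} {x : α}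

lemma medL_eq_filter_lt (hx : x ∈ Y) (hrank : rank Y x = medianIdx #Y) :
    medL Y = Y.filter (· < x) := by
  rw [medL, ← hrank]
  exact filter_congr fun _ _ => rank_lt_rank_iff hx

lemma medR_eq_filter_le (hx : x ∈ Y) (hrank : rank Y x = medianIdx #Y) :
    medR Y = Y.filter (x ≤ ·) := by
  rw [medR, ← hrank]
  exact filter_congr fun _ _ => by rw [← not_lt, rank_lt_rank_iff hx, not_lt]

end MedianPartition

lemma Finset.card_insert_erase_of_notMem {α : Type*} [DecidableEq α] {Y : Finset α} {a b : α}
    (ha : a ∉ Y) (hb : b ∈ Y) : #(insert a (Y.erase b)) = #Y := by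
  rw [card_insert_of_notMem fun h => ha (mem_of_mem_erase h), card_erase_add_one hb]

theorem median_replace_both_left_general {α : Type*} [LinearOrder α]
    (X : Finset α)
    (xI : α) (hxI : xI ∈ X) (hrank : rank X xI = medianIdx X.card)
    (xp : α) (hxp : xp ∉ X) (xm : α) (hxm : xm ∈ X)
    (hplt : xp < xI) (hmlt : xm < xI)
    (X' : Finset α) (hX' : X' = (X \ {xm}) ∪ {xp}) :
    medL X' = (insert xp (medL X)) \ {xm} ∧ medR X' = medR X := by
  rw [sdiff_singleton_eq_erase, union_singleton] at hX'
  have hxI' : xI ∈ X' := hX' ▸ mem_insert_of_mem (mem_erase.2 ⟨hmlt.ne', hxI⟩)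
  have hrank' : rank X' xI = medianIdx #X' := by
    rw [hX', rank_insert_erase_of_le hxp hxm hplt.le hmlt.le, card_insert_erase_of_notMem hxp hxm,
      hrank]
  have hpm : xp ≠ xm := fun h => hxp (h ▸ hxm)
  have hm_not_right : xm ∉ X.filter (xI ≤ ·) := fun h => (mem_filter.1 h).2.not_gt hmlt
  rw [medL_eq_filter_lt hxI' hrank', medL_eq_filter_lt hxI hrank, medR_eq_filter_le hxI' hrank',
    medR_eq_filter_le hxI hrank, hX', sdiff_singleton_eq_erase, erase_insert_of_ne hpm]
  refine ⟨?_, ?_⟩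
  · rw [filter_insert, if_pos hplt, filter_erase]
  · rw [filter_insert, if_neg hplt.not_ge, filter_erase, erase_eq_of_notMem hm_not_right]

theorem median_replace_both_left {α : Type*} [LinearOrder α]
    (X : Finset α) (hn : 1 ≤ X.card)
    (xI : α) (hxI : xI ∈ X) (hrank : rank X xI = medianIdx X.card)
    (xp : α) (hxp : xp ∉ X) (xm : α) (hxm : xm ∈ X)
    (hplt : xp < xI) (hmlt : xm < xI)
    (X' : Finset α) (hX' : X' = (X \ {xm}) ∪ {xp}) :
    medL X' = (insert xp (medL X)) \ {xm} ∧ medR X' = medR X :=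
  median_replace_both_left_general X xI hxI hrank xp hxp xm hxm hplt hmlt X' hX'
end

section
/- Let X be a finite subset of α with n = |X| ≥ 3 so that I = I(n) ≥ 2. Let x⁺ ∈ α with x⁺ ∉ X and let x⁻ ∈ X, and suppose x⁺ > x_(I−1) and x⁻ > x_(I−1). Set X' = (X \ {x⁻}) ∪ {x⁺}, so |X'| = n and the median index is unchanged. Then L(X') = L(X) and R(X') = ({x⁺} ∪ R(X)) \ {x⁻}. -/
open Finset

/-!
If `a ∈ X` has rank `I(|X|) - 1`, then `L(X)` consists of the elements `≤ a` and `R(X)` of the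
elements `> a`. Replacing an element above `a` by another element above `a` keeps the size of `X`,
hence `I`, and the rank of `a`; so `a` still splits `X'` and the partition changes only above `a`.
-/

section Rank

variable {α : Type*} [LinearOrder α] {X : Finset α} {a x : α}

lemma rank_pos_of_mem (ha : a ∈ X) : 0 < rank X a :=
  card_pos.mpr ⟨a, mem_filter.mpr ⟨ha, le_rfl⟩⟩

lemma rank_mono_s9 (h : x ≤ a) : rank X x ≤ rank X a :=
  card_le_card (monotone_filter_right X fun _ _ hy => hy.trans h)

lemma rank_lt_rank_s9 (hx : x ∈ X) (h : a < x) : rank X a < rank X x := by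
  refine card_lt_card ((ssubset_iff_of_subset ?_).mpr ⟨x, ?_, ?_⟩)
  · exact monotone_filter_right X fun _ _ hy => hy.trans h.le
  · exact mem_filter.mpr ⟨hx, le_rfl⟩
  · exact fun hmem => (mem_filter.mp hmem).2.not_gt h

lemma rank_le_rank_iff (hx : x ∈ X) : rank X x ≤ rank X a ↔ x ≤ a :=
  ⟨fun h => not_lt.mp fun hlt => (rank_lt_rank_s9 hx hlt).not_ge h, rank_mono_s9⟩

end Rank

section MedianPartition

variable {α : Type*} [LinearOrder α] {X : Finset α} {a : α}

lemma rank_lt_medianIdx_iff (ha : a ∈ X) (hrank : rank X a = medianIdx X.card - 1) {x : α}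
    (hx : x ∈ X) : rank X x < medianIdx X.card ↔ x ≤ a := by
  have := rank_pos_of_mem ha
  rw [← rank_le_rank_iff hx]
  omega

lemma medL_eq_filter_le (ha : a ∈ X) (hrank : rank X a = medianIdx X.card - 1) :
    medL X = X.filter (· ≤ a) :=
  filter_congr fun _ hx => rank_lt_medianIdx_iff ha hrank hx

lemma medR_eq_filter_gt (ha : a ∈ X) (hrank : rank X a = medianIdx X.card - 1) :
    medR X = X.filter (a < ·) :=
  filter_congr fun _ hx => by rw [← not_lt, rank_lt_medianIdx_iff ha hrank hx, not_le]

end MedianPartition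

section Replace

variable {α : Type*} [LinearOrder α] {X : Finset α} {a xp xm : α}

lemma card_insert_erase (hxp : xp ∉ X) (hxm : xm ∈ X) : (insert xp (X.erase xm)).card = X.card := by
  rw [card_insert_of_notMem fun h => hxp (mem_of_mem_erase h), card_erase_of_mem hxm]
  have := card_pos.mpr ⟨xm, hxm⟩
  omega

lemma filter_le_insert_erase (hp : a < xp) (hm : a < xm) :
    (insert xp (X.erase xm)).filter (· ≤ a) = X.filter (· ≤ a) := by
  rw [filter_insert, if_neg hp.not_ge, filter_erase,
    erase_eq_of_notMem fun h => (mem_filter.mp h).2.not_gt hm]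

lemma filter_gt_insert_erase (hp : a < xp) (hne : xp ≠ xm) :
    (insert xp (X.erase xm)).filter (a < ·) = (insert xp (X.filter (a < ·))).erase xm := by
  rw [filter_insert, if_pos hp, filter_erase, erase_insert_of_ne hne]

lemma rank_insert_erase (hp : a < xp) (hm : a < xm) :
    rank (insert xp (X.erase xm)) a = rank X a :=
  congrArg card (filter_le_insert_erase hp hm)

end Replace

theorem median_replace_both_right_general {α : Type*} [LinearOrder α]
    (X : Finset α)
    (xIm1 : α) (hxIm1 : xIm1 ∈ X) (hrank : rank X xIm1 = medianIdx X.card - 1)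
    (xp : α) (hxp : xp ∉ X) (xm : α) (hxm : xm ∈ X)
    (hpgt : xIm1 < xp) (hmgt : xIm1 < xm)
    (X' : Finset α) (hX' : X' = (X \ {xm}) ∪ {xp}) :
    medL X' = medL X ∧ medR X' = (insert xp (medR X)) \ {xm} := by
  rw [sdiff_singleton_eq_erase, union_singleton] at hX'
  subst hX'
  have hne : xp ≠ xm := fun h => hxp (h ▸ hxm)
  have hmem' : xIm1 ∈ insert xp (X.erase xm) := mem_insert_of_mem (mem_erase.mpr ⟨hmgt.ne, hxIm1⟩)
  have hrank' : rank (insert xp (X.erase xm)) xIm1 = medianIdx (insert xp (X.erase xm)).card - 1 := by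
    rw [rank_insert_erase hpgt hmgt, card_insert_erase hxp hxm, hrank]
  rw [medL_eq_filter_le hmem' hrank', medL_eq_filter_le hxIm1 hrank, filter_le_insert_erase hpgt hmgt,
    medR_eq_filter_gt hmem' hrank', medR_eq_filter_gt hxIm1 hrank, filter_gt_insert_erase hpgt hne,
    sdiff_singleton_eq_erase]
  exact ⟨rfl, rfl⟩

theorem median_replace_both_right {α : Type*} [LinearOrder α]
    (X : Finset α) (hn : 3 ≤ X.card)
    (xIm1 : α) (hxIm1 : xIm1 ∈ X) (hrank : rank X xIm1 = medianIdx X.card - 1)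
    (xp : α) (hxp : xp ∉ X) (xm : α) (hxm : xm ∈ X)
    (hpgt : xIm1 < xp) (hmgt : xIm1 < xm)
    (X' : Finset α) (hX' : X' = (X \ {xm}) ∪ {xp}) :
    medL X' = medL X ∧ medR X' = (insert xp (medR X)) \ {xm} :=
  median_replace_both_right_general X xIm1 hxIm1 hrank xp hxp xm hxm hpgt hmgt X' hX'
end

section
/- Let X be a finite subset of α with n = |X| odd and n ≥ 1, and let x⁻ ∈ L(X). Set X' = X \ {x⁻}. Then L(X') = L(X) \ {x⁻} and R(X') = R(X). -/
open Finset

lemma rank_pos' {α : Type*} [LinearOrder α] {X : Finset α} {x : α} (hx : x ∈ X) :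
    1 ≤ rank X x := by
  unfold rank
  exact card_pos.mpr ⟨x, mem_filter.mpr ⟨hx, le_refl x⟩⟩

lemma rank_sdiff' {α : Type*} [LinearOrder α] (X : Finset α) {xm : α} (hxm : xm ∈ X) (y : α) :
    rank (X \ {xm}) y = rank X y - (if xm ≤ y then 1 else 0) := by
  unfold rank
  rw [sdiff_singleton_eq_erase, filter_erase]
  by_cases h : xm ≤ y
  · have hmem : xm ∈ X.filter (fun z => z ≤ y) := mem_filter.mpr ⟨hxm, h⟩
    simp [h, card_erase_of_mem hmem]
  · rw [erase_eq_of_notMem (by simp [h])]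
    simp [h]

lemma rank_lt_rank' {α : Type*} [LinearOrder α] {X : Finset α} {x y : α}
    (hx : x ∈ X) (hy : y ∈ X) (h : x < y) : rank X x < rank X y := by
  unfold rank
  apply card_lt_card
  constructor
  · intro z hz
    rw [mem_filter] at hz ⊢
    exact ⟨hz.1, hz.2.trans h.le⟩
  · intro hsub
    have := hsub (mem_filter.mpr ⟨hy, le_refl y⟩)
    rw [mem_filter] at this
    exact absurd this.2 (not_le.mpr h)

theorem median_delete_odd_left {α : Type*} [LinearOrder α]
    (X : Finset α) (hn : 1 ≤ X.card) (hodd : Odd X.card)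
    (xm : α) (hxm : xm ∈ medL X)
    (X' : Finset α) (hX' : X' = X \ {xm}) :
    medL X' = medL X \ {xm} ∧ medR X' = medR X := by
  subst hX'
  rw [medL, mem_filter] at hxm
  obtain ⟨hxmX, hxmrk⟩ := hxm
  have hcard : (X \ {xm}).card = X.card - 1 := by
    rw [sdiff_singleton_eq_erase, card_erase_of_mem hxmX]
  obtain ⟨m, hm⟩ := hodd
  have hmed : medianIdx ((X \ {xm}).card) = medianIdx X.card - 1 := by
    rw [hcard]; unfold medianIdx; omega
  have hk1 : 1 ≤ medianIdx X.card := by unfold medianIdx; omega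
  constructor
  · ext y
    simp only [medL, mem_filter, mem_sdiff, mem_singleton, hmed,
      rank_sdiff' X hxmX]
    constructor
    · rintro ⟨⟨hyX, hyne⟩, hlt⟩
      refine ⟨⟨hyX, ?_⟩, hyne⟩
      by_cases h : xm ≤ y
      · simp only [h, if_true] at hlt
        have := rank_pos' hyX
        omega
      · have : y < xm := lt_of_not_ge h
        have := rank_lt_rank' hyX hxmX this
        omega
    · rintro ⟨⟨hyX, hlt⟩, hyne⟩
      refine ⟨⟨hyX, hyne⟩, ?_⟩
      by_cases h : xm ≤ y
      · have hxy : xm < y := lt_of_le_of_ne h (fun e => hyne e.symm)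
        have := rank_lt_rank' hxmX hyX hxy
        simp only [h, if_true]
        omega
      · have : y < xm := lt_of_not_ge h
        have := rank_lt_rank' hyX hxmX this
        simp only [h, if_false]
        omega
  · ext y
    simp only [medR, mem_filter, mem_sdiff, mem_singleton, hmed,
      rank_sdiff' X hxmX]
    constructor
    · rintro ⟨⟨hyX, hyne⟩, hge⟩
      refine ⟨hyX, ?_⟩
      by_cases h : xm ≤ y
      · simp only [h, if_true] at hge
        have := rank_pos' hyX
        omega
      · have : y < xm := lt_of_not_ge h
        have := rank_lt_rank' hyX hxmX this
        simp only [h, if_false] at hge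
        omega
    · rintro ⟨hyX, hge⟩
      have hyne : y ≠ xm := by rintro rfl; omega
      refine ⟨⟨hyX, hyne⟩, ?_⟩
      by_cases h : xm ≤ y
      · simp only [h, if_true]; omega
      · have : y < xm := lt_of_not_ge h
        have := rank_lt_rank' hyX hxmX this
        omega
end

section
/- Let X be a finite subset of α with n = |X| ≥ 1. Let X⁺ ⊆ α be a set with |X⁺| ≤ 1 and X⁺ ∩ X = ∅, let X⁻ ⊆ X be a set with |X⁻| ≤ 1, and set X' = (X \ X⁻) ∪ X⁺. Then for every y ∈ X ∩ X': if y ∈ L(X) and y ∈ R(X'), then y is the maximum element of L(X) (i.e., y = x_(I(n)−1)); and if y ∈ R(X) and y ∈ L(X'), then y is the minimum element of R(X) (i.e., y = x_(I(n))). -/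
open Finset

private lemma rank_lt_rank_aux {α : Type*} [LinearOrder α] {X : Finset α} {y z : α}
    (hz : z ∈ X) (h : y < z) : rank X y < rank X z := by
  unfold rank
  apply Finset.card_lt_card
  constructor
  · intro w hw
    simp only [Finset.mem_filter] at hw ⊢
    exact ⟨hw.1, hw.2.trans h.le⟩
  · intro hsub
    have := hsub (Finset.mem_filter.mpr ⟨hz, le_refl z⟩)
    simp only [Finset.mem_filter] at this
    exact absurd this.2 (not_le.mpr h)

theorem median_partition_boundary {α : Type*} [LinearOrder α]
    (X Xp Xm : Finset α) (hn : 1 ≤ X.card)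
    (hpcard : Xp.card ≤ 1) (hpdisj : Xp ∩ X = ∅)
    (hmsub : Xm ⊆ X) (hmcard : Xm.card ≤ 1)
    (X' : Finset α) (hX' : X' = (X \ Xm) ∪ Xp) :
    ∀ y ∈ X ∩ X',
      (y ∈ medL X → y ∈ medR X' →
        (∀ z ∈ medL X, z ≤ y) ∧ rank X y = medianIdx X.card - 1) ∧
      (y ∈ medR X → y ∈ medL X' →
        (∀ z ∈ medR X, y ≤ z) ∧ rank X y = medianIdx X.card) := by
  intro y hy
  rw [Finset.mem_inter] at hy
  obtain ⟨hyX, hyX'⟩ := hy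
  have hdisj : Disjoint Xp X := Finset.disjoint_iff_inter_eq_empty.mpr hpdisj
  have hdisj' : Disjoint (X \ Xm) Xp := (hdisj.mono_right (Finset.sdiff_subset)).symm
  -- cardinality of X'
  have hcard' : X'.card = X.card - Xm.card + Xp.card := by
    rw [hX', Finset.card_union_of_disjoint hdisj', Finset.card_sdiff_of_subset hmsub]
  -- filter decomposition
  have hfilt : X'.filter (fun w => w ≤ y) =
      (X.filter (fun w => w ≤ y) \ Xm.filter (fun w => w ≤ y)) ∪
        Xp.filter (fun w => w ≤ y) := by
    rw [hX']
    ext w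
    simp only [Finset.mem_filter, Finset.mem_union, Finset.mem_sdiff]
    tauto
  have hsubfilt : Xm.filter (fun w => w ≤ y) ⊆ X.filter (fun w => w ≤ y) :=
    Finset.filter_subset_filter _ hmsub
  have hdisjf : Disjoint (X.filter (fun w => w ≤ y) \ Xm.filter (fun w => w ≤ y))
      (Xp.filter (fun w => w ≤ y)) := by
    apply Disjoint.mono (Finset.sdiff_subset.trans (Finset.filter_subset _ _))
      (Finset.filter_subset _ _)
    exact hdisj.symm
  have hrank' : rank X' y = rank X y - rank Xm y + rank Xp y := by
    unfold rank
    rw [hfilt, Finset.card_union_of_disjoint hdisjf, Finset.card_sdiff_of_subset hsubfilt]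
  have ha : rank Xm y ≤ Xm.card := Finset.card_filter_le _ _
  have hb : rank Xp y ≤ Xp.card := Finset.card_filter_le _ _
  have har : rank Xm y ≤ rank X y := Finset.card_le_card hsubfilt
  have hmn : Xm.card ≤ X.card := Finset.card_le_card hmsub
  have hr1 : 1 ≤ rank X y := by
    apply Finset.card_pos.mpr
    exact ⟨y, Finset.mem_filter.mpr ⟨hyX, le_refl y⟩⟩
  constructor
  · intro hL hR'
    rw [medL, Finset.mem_filter] at hL
    rw [medR, Finset.mem_filter] at hR'
    have hrL := hL.2
    have hrR := hR'.2
    rw [hrank', hcard'] at hrR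
    have hkey : rank X y = medianIdx X.card - 1 := by
      unfold medianIdx at *
      omega
    refine ⟨?_, hkey⟩
    intro z hz
    rw [medL, Finset.mem_filter] at hz
    by_contra hzy
    push_neg at hzy
    have := rank_lt_rank_aux hz.1 hzy
    unfold medianIdx at *
    omega
  · intro hR hL'
    rw [medR, Finset.mem_filter] at hR
    rw [medL, Finset.mem_filter] at hL'
    have hrR := hR.2
    have hrL := hL'.2
    rw [hrank', hcard'] at hrL
    have hkey : rank X y = medianIdx X.card := by
      unfold medianIdx at *
      omega
    refine ⟨?_, hkey⟩
    intro z hz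
    rw [medR, Finset.mem_filter] at hz
    by_contra hzy
    push_neg at hzy
    have := rank_lt_rank_aux hyX hzy
    unfold medianIdx at *
    omega
end

section
/- Let X be a finite subset of α with n = |X| ≥ 1, let x⁺ ∈ α with x⁺ ∉ X, and set X' = X ∪ {x⁺}. Then for every y ∈ X: if y ∈ L(X) and y ∈ R(X'), then y is the maximum element of L(X) (i.e., y = x_(I(n)−1)); and if y ∈ R(X) and y ∈ L(X'), then y is the minimum element of R(X) (i.e., y = x_(I(n))). -/
open Finset

theorem median_partition_boundary_insert {α : Type*} [LinearOrder α]
    (X : Finset α) (hn : 1 ≤ X.card)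
    (xp : α) (hxp : xp ∉ X)
    (X' : Finset α) (hX' : X' = X ∪ {xp}) :
    ∀ y ∈ X,
      (y ∈ medL X → y ∈ medR X' →
        (∀ z ∈ medL X, z ≤ y) ∧ rank X y = medianIdx X.card - 1) ∧
      (y ∈ medR X → y ∈ medL X' →
        (∀ z ∈ medR X, y ≤ z) ∧ rank X y = medianIdx X.card) := by
  have rank_mono : ∀ {z y : α}, z ≤ y → rank X z ≤ rank X y := by
    intro z y h
    apply Finset.card_le_card
    intro x hx
    rw [Finset.mem_filter] at *
    exact ⟨hx.1, hx.2.trans h⟩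
  have rank_strict : ∀ {z y : α}, z ∈ X → y < z → rank X y < rank X z := by
    intro z y hz h
    apply Finset.card_lt_card
    constructor
    · intro x hx
      rw [Finset.mem_filter] at *
      exact ⟨hx.1, hx.2.trans h.le⟩
    · intro hsub
      have := hsub (Finset.mem_filter.2 ⟨hz, le_refl z⟩)
      exact absurd (Finset.mem_filter.1 this).2 (not_le.2 h)
  have hX'i : X' = insert xp X := by rw [hX']; ext a; simp [or_comm]
  have hcard : X'.card = X.card + 1 := by
    rw [hX'i, Finset.card_insert_of_notMem hxp]
  have rank_ins : ∀ y : α, rank X' y = rank X y + (if xp ≤ y then 1 else 0) := by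
    intro y
    rw [hX'i]
    unfold rank
    rw [Finset.filter_insert]
    split
    · rw [Finset.card_insert_of_notMem (fun hh => hxp (Finset.mem_filter.1 hh).1)]
    · simp
  intro y hy
  constructor
  · intro hL hR
    have h1 : rank X y < medianIdx X.card := (Finset.mem_filter.1 hL).2
    have h2 : medianIdx X'.card ≤ rank X' y := (Finset.mem_filter.1 hR).2
    have h3 : rank X' y ≤ rank X y + 1 := by rw [rank_ins]; split <;> omega
    have h4 : medianIdx X.card ≤ medianIdx X'.card := by
      unfold medianIdx; rw [hcard]; omega
    have hrank : rank X y = medianIdx X.card - 1 := by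
      unfold medianIdx at *
      omega
    refine ⟨fun z hz => ?_, hrank⟩
    have hz' : rank X z < medianIdx X.card := (Finset.mem_filter.1 hz).2
    by_contra hzy
    push_neg at hzy
    have := rank_strict ((Finset.mem_filter.1 hz).1) hzy
    omega
  · intro hR hL
    have h1 : medianIdx X.card ≤ rank X y := (Finset.mem_filter.1 hR).2
    have h2 : rank X' y < medianIdx X'.card := (Finset.mem_filter.1 hL).2
    have h3 : rank X y ≤ rank X' y := by rw [rank_ins]; omega
    have hrank : rank X y = medianIdx X.card := by
      unfold medianIdx at *
      rw [hcard] at h2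
      omega
    refine ⟨fun z hz => ?_, hrank⟩
    have hz' : medianIdx X.card ≤ rank X z := (Finset.mem_filter.1 hz).2
    by_contra hzy
    push_neg at hzy
    have := rank_strict hy hzy
    omega
end

section
/- Let X be a finite subset of α with n = |X| ≥ 1, let x⁻ ∈ X, and set X' = X \ {x⁻}. Then for every y ∈ X': if y ∈ L(X) and y ∈ R(X'), then y is the maximum element of L(X) (i.e., y = x_(I(n)−1)); and if y ∈ R(X) and y ∈ L(X'), then y is the minimum element of R(X) (i.e., y = x_(I(n))). -/
open Finset

/-! Deleting one element lowers each rank, and the median index, by at most one and never raises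
them. An element that changes sides of the median partition therefore has rank exactly at the
boundary, and the rank determines its position in the order. -/

section MedianPartition

variable {α : Type*} [LinearOrder α] {X : Finset α} {a y z : α}

theorem mem_medL : y ∈ medL X ↔ y ∈ X ∧ rank X y < medianIdx X.card := mem_filter

theorem mem_medR : y ∈ medR X ↔ y ∈ X ∧ medianIdx X.card ≤ rank X y := mem_filter

theorem rank_lt_rank_of_lt_s18 (hz : z ∈ X) (h : y < z) : rank X y < rank X z := by
  refine card_lt_card ⟨monotone_filter_right X fun _ _ hay => hay.trans h.le, fun hsub => ?_⟩
  exact h.not_ge (mem_filter.mp (hsub (mem_filter.mpr ⟨hz, le_rfl⟩))).2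

theorem le_of_rank_le_rank (hy : y ∈ X) (h : rank X y ≤ rank X z) : y ≤ z :=
  not_lt.mp fun hzy => (rank_lt_rank_of_lt_s18 hy hzy).not_ge h

theorem rank_erase_le (a : α) : rank (X.erase a) y ≤ rank X y :=
  card_le_card (filter_subset_filter _ (erase_subset a X))

theorem rank_le_rank_erase_add_one (a : α) : rank X y ≤ rank (X.erase a) y + 1 := by
  have := pred_card_le_card_erase (a := a) (s := X.filter (· ≤ y))
  rw [← filter_erase] at this
  unfold rank
  omega

theorem medianIdx_card_erase_le (a : α) : medianIdx (X.erase a).card ≤ medianIdx X.card := by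
  have := card_erase_le (a := a) (s := X)
  unfold medianIdx
  omega

theorem medianIdx_card_le_medianIdx_card_erase_add_one (a : α) :
    medianIdx X.card ≤ medianIdx (X.erase a).card + 1 := by
  have := pred_card_le_card_erase (a := a) (s := X)
  unfold medianIdx
  omega

theorem rank_eq_of_mem_medL_of_mem_medR_erase (hL : y ∈ medL X) (hR : y ∈ medR (X.erase a)) :
    rank X y = medianIdx X.card - 1 := by
  have := medianIdx_card_le_medianIdx_card_erase_add_one (X := X) a
  have := rank_erase_le (X := X) (y := y) a
  have := (mem_medL.mp hL).2
  have := (mem_medR.mp hR).2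
  omega

theorem rank_eq_of_mem_medR_of_mem_medL_erase (hR : y ∈ medR X) (hL : y ∈ medL (X.erase a)) :
    rank X y = medianIdx X.card := by
  have := medianIdx_card_erase_le (X := X) a
  have := rank_le_rank_erase_add_one (X := X) (y := y) a
  have := (mem_medR.mp hR).2
  have := (mem_medL.mp hL).2
  omega

end MedianPartition

theorem median_partition_boundary_delete_general {α : Type*} [LinearOrder α]
    (X : Finset α)
    (xm : α)
    (X' : Finset α) (hX' : X' = X \ {xm}) :
    ∀ y ∈ X',
      (y ∈ medL X → y ∈ medR X' →
        (∀ z ∈ medL X, z ≤ y) ∧ rank X y = medianIdx X.card - 1) ∧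
      (y ∈ medR X → y ∈ medL X' →
        (∀ z ∈ medR X, y ≤ z) ∧ rank X y = medianIdx X.card) := by
  rw [hX', sdiff_singleton_eq_erase]
  intro y hy
  have hyX : y ∈ X := mem_of_mem_erase hy
  constructor
  · intro hL hR
    have hrank := rank_eq_of_mem_medL_of_mem_medR_erase hL hR
    refine ⟨fun z hz => le_of_rank_le_rank (mem_medL.mp hz).1 ?_, hrank⟩
    have := (mem_medL.mp hz).2
    omega
  · intro hR hL
    have hrank := rank_eq_of_mem_medR_of_mem_medL_erase hR hL
    exact ⟨fun z hz => le_of_rank_le_rank hyX (hrank ▸ (mem_medR.mp hz).2), hrank⟩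

theorem median_partition_boundary_delete {α : Type*} [LinearOrder α]
    (X : Finset α) (hn : 1 ≤ X.card)
    (xm : α) (hxm : xm ∈ X)
    (X' : Finset α) (hX' : X' = X \ {xm}) :
    ∀ y ∈ X',
      (y ∈ medL X → y ∈ medR X' →
        (∀ z ∈ medL X, z ≤ y) ∧ rank X y = medianIdx X.card - 1) ∧
      (y ∈ medR X → y ∈ medL X' →
        (∀ z ∈ medR X, y ≤ z) ∧ rank X y = medianIdx X.card) :=
  median_partition_boundary_delete_general X xm X' hX'
end

section
/- Let α be a type and let (r_ℓ)_{ℓ ≥ 1} be a sequence of linear orders on α. For a finite subset X of α and a finite binary word w = (b_1, …, b_k) ∈ {0,1}^k, define the cell C_w(X) recursively by C_ε(X) = X (ε the empty word), C_{w·0}(X) = L_{r_{|w|+1}}(C_w(X)), and C_{w·1}(X) = R_{r_{|w|+1}}(C_w(X)), where L_r and R_r denote the median partition with respect to the linear order r. Let X⁺ ⊆ α with |X⁺| ≤ 1 and X⁺ ∩ X = ∅, let X⁻ ⊆ X with |X⁻| ≤ 1, and set X' = (X \ X⁻) ∪ X⁺. Then for every finite binary word w: |C_w(X) \ C_w(X')|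 ≤ 1 and |C_w(X') \ C_w(X)| ≤ 1; that is, every cell of the nested median partition of X' is obtained from the corresponding cell for X by deleting at most one point and inserting at most one point. -/
/-!
Cells are obtained by iterating the median maps `L_r` and `R_r`, so it suffices that both
preserve the relation `|A \ B| ≤ 1 ∧ |B \ A| ≤ 1`. For `L_r`, let `k = |L_r(A)|`: the `k - 1`
smallest elements of `A ∩ B` lie in both `L_r(A)` and `L_r(B)`, since passing from `A ∩ B` to
`A` or to `B` raises ranks by at most one, while the median index of `B` is at least that of `A`,
or one less when `B ⊆ A`. Hence `|L_r(A) \ L_r(B)| ≤ k - (k - 1) = 1`. The same argument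
applies to `R_r`, which is the lower part of its set for the reversed order, of size
`⌊m/2⌋ + 1` instead of `⌈m/2⌉ - 1`.
-/

open Finset

/-- 1-indexed rank of `x` in `X` with respect to the linear order `r`. -/
def rankIn {α : Type*} (r : LinearOrder α) (X : Finset α) (x : α) : ℕ :=
  letI := r
  (X.filter (fun y => y ≤ x)).card

/-- Left part of the median partition with respect to the linear order `r`. -/
def medLIn {α : Type*} (r : LinearOrder α) (X : Finset α) : Finset α :=
  X.filter (fun x => rankIn r X x < medianIdx X.card)

/-- Right part of the median partition with respect to the linear order `r`. -/
def medRIn {α : Type*} (r : LinearOrder α) (X : Finset α) : Finset α :=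
  X.filter (fun x => medianIdx X.card ≤ rankIn r X x)

/-- The cell of the nested median partition: `cell r ℓ w X` splits `X`
along the word `w` read left to right, using the linear order `r ℓ` at the
first split, `r (ℓ+1)` at the second, and so on.  The cell `C_w(X)` of the
paper is `cell r 1 w X`, where the bit `false` selects the left (below-median)
part and `true` selects the right part. -/
def cell {α : Type*} (r : ℕ → LinearOrder α) : ℕ → List Bool → Finset α → Finset α
  | _, [], X => X
  | ℓ, b :: w, X =>
      cell r (ℓ + 1) w (if b then medRIn (r ℓ) X else medLIn (r ℓ) X)

section MedianPartition

variable {α : Type*}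

abbrev dualOrder (r : LinearOrder α) : LinearOrder α :=
  letI := r; inferInstanceAs (LinearOrder αᵒᵈ)

def lowerPart (r : LinearOrder α) (m : ℕ) (A : Finset α) : Finset α :=
  {x ∈ A | rankIn r A x < m}

lemma card_lowerPart (r : LinearOrder α) (m : ℕ) (A : Finset α) :
    #(lowerPart r m A) = min #A (m - 1) := by
  let := r
  set f := A.orderEmbOfFin rfl
  have rankIn_f (i : Fin #A) : rankIn r A (f i) = (i : ℕ) + 1 := by
    have : {y ∈ A | y ≤ f i} = (Iic i).map f.toEmbedding := by
      ext y
      simp only [mem_filter, mem_map, mem_Iic]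
      constructor
      · rintro ⟨hy, hle⟩
        obtain ⟨j, rfl⟩ : y ∈ Set.range f := by simpa [f] using hy
        exact ⟨j, f.le_iff_le.1 hle, rfl⟩
      · rintro ⟨j, hj, rfl⟩
        exact ⟨orderEmbOfFin_mem A rfl j, f.le_iff_le.2 hj⟩
    rw [rankIn, this, card_map, Fin.card_Iic]
  have : lowerPart r m A = ({i | (i : ℕ) < m - 1} : Finset (Fin #A)).map f.toEmbedding := by
    ext y
    simp only [lowerPart, mem_filter, mem_map, mem_univ, true_and]
    constructor
    · rintro ⟨hy, hlt⟩
      obtain ⟨j, rfl⟩ : y ∈ Set.range f := by simpa [f] using hy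
      exact ⟨j, by rw [rankIn_f] at hlt; omega, rfl⟩
    · rintro ⟨j, hj, rfl⟩
      exact ⟨orderEmbOfFin_mem A rfl j, by rw [RelEmbedding.coe_toEmbedding, rankIn_f]; omega⟩
  rw [this, card_map, Fin.card_filter_val_lt]

lemma rankIn_le_rankIn_inter_add_card_sdiff [DecidableEq α] (r : LinearOrder α)
    (A B : Finset α) (x : α) : rankIn r A x ≤ rankIn r (A ∩ B) x + #(A \ B) := by
  let := r
  calc #{y ∈ A | y ≤ x} = #({y ∈ A \ B | y ≤ x} ∪ {y ∈ A ∩ B | y ≤ x}) := by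
        rw [← filter_union, sdiff_union_inter]
    _ ≤ #{y ∈ A \ B | y ≤ x} + #{y ∈ A ∩ B | y ≤ x} := card_union_le _ _
    _ ≤ #(A \ B) + #{y ∈ A ∩ B | y ≤ x} := Nat.add_le_add_right (card_filter_le _ _) _
    _ = _ := Nat.add_comm _ _

lemma rankIn_add_rankIn_dualOrder (r : LinearOrder α) {A : Finset α} {x : α} (hx : x ∈ A) :
    rankIn r A x + rankIn (dualOrder r) A x = #A + 1 := by
  let := r
  change #{y ∈ A | y ≤ x} + #{y ∈ A | x ≤ y} = #A + 1
  have key := card_union_add_card_inter {y ∈ A | y ≤ x} {y ∈ A | x ≤ y}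
  rw [← filter_or, ← filter_and, filter_true_of_mem (fun y _ => le_total y x)] at key
  simp_rw [← le_antisymm_iff, filter_eq', if_pos hx, card_singleton] at key
  exact key.symm

lemma medRIn_eq_lowerPart_dualOrder (r : LinearOrder α) (A : Finset α) :
    medRIn r A = lowerPart (dualOrder r) (#A / 2 + 2) A := by
  refine filter_congr fun x hx => ?_
  have := rankIn_add_rankIn_dualOrder r hx
  unfold medianIdx
  omega

section Stability

variable [DecidableEq α] (r : LinearOrder α) {A B : Finset α}

lemma card_lowerPart_sdiff_le {μ : ℕ → ℕ} (hμ : Monotone μ) (hμ_succ : ∀ n, μ (n + 1) ≤ μ n + 1)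
    (hAB : #(A \ B) ≤ 1) (hBA : #(B \ A) ≤ 1) :
    #(lowerPart r (μ #A) A \ lowerPart r (μ #B) B) ≤ 1 := by
  have hk := card_lowerPart r (μ #A) A
  set k := #(lowerPart r (μ #A) A)
  have hA := card_inter_add_card_sdiff A B
  have hB := card_inter_add_card_sdiff B A
  rw [inter_comm] at hB
  have hμAB : μ #A + #(B \ A) ≤ μ #B + 1 := by
    rcases Nat.le_one_iff_eq_zero_or_eq_one.1 hBA with h | h
    · rw [h]
      exact (hμ (by omega : #A ≤ #B + 1)).trans (hμ_succ _)
    · rw [h]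
      exact Nat.add_le_add_right (hμ (by omega)) 1
  set S := lowerPart r k (A ∩ B)
  have hS : #S = k - 1 := by
    rw [card_lowerPart]
    omega
  have hSA : S ⊆ lowerPart r (μ #A) A := by
    intro x hx
    simp only [S, lowerPart, mem_filter] at hx ⊢
    have := rankIn_le_rankIn_inter_add_card_sdiff r A B x
    exact ⟨mem_of_mem_inter_left hx.1, by omega⟩
  have hSB : S ⊆ lowerPart r (μ #B) B := by
    intro x hx
    simp only [S, lowerPart, mem_filter] at hx ⊢
    have := rankIn_le_rankIn_inter_add_card_sdiff r B A x
    rw [inter_comm] at this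
    exact ⟨mem_of_mem_inter_right hx.1, by omega⟩
  calc #(lowerPart r (μ #A) A \ lowerPart r (μ #B) B)
      ≤ #(lowerPart r (μ #A) A \ S) := card_le_card (sdiff_subset_sdiff le_rfl hSB)
    _ = k - #S := card_sdiff_of_subset hSA
    _ ≤ 1 := by omega

lemma card_medLIn_sdiff_le (hAB : #(A \ B) ≤ 1) (hBA : #(B \ A) ≤ 1) :
    #(medLIn r A \ medLIn r B) ≤ 1 :=
  card_lowerPart_sdiff_le r (μ := medianIdx) (fun _ _ h => by unfold medianIdx; omega)
    (fun _ => by unfold medianIdx; omega) hAB hBA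

lemma card_medRIn_sdiff_le (hAB : #(A \ B) ≤ 1) (hBA : #(B \ A) ≤ 1) :
    #(medRIn r A \ medRIn r B) ≤ 1 := by
  rw [medRIn_eq_lowerPart_dualOrder, medRIn_eq_lowerPart_dualOrder]
  exact card_lowerPart_sdiff_le (dualOrder r) (μ := fun n => n / 2 + 2)
    (fun _ _ h => Nat.add_le_add_right (Nat.div_le_div_right h) 2) (fun _ => by omega) hAB hBA

end Stability

lemma card_cell_sdiff_le [DecidableEq α] (r : ℕ → LinearOrder α) (w : List Bool) (ℓ : ℕ)
    {A B : Finset α} (hAB : #(A \ B) ≤ 1) (hBA : #(B \ A) ≤ 1) :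
    #(cell r ℓ w A \ cell r ℓ w B) ≤ 1 := by
  induction w generalizing ℓ A B with
  | nil => exact hAB
  | cons b w ih =>
    cases b
    · exact ih _ (card_medLIn_sdiff_le _ hAB hBA) (card_medLIn_sdiff_le _ hBA hAB)
    · exact ih _ (card_medRIn_sdiff_le _ hAB hBA) (card_medRIn_sdiff_le _ hBA hAB)

end MedianPartition

theorem kd_tree_stability_general {α : Type*} [DecidableEq α]
    (r : ℕ → LinearOrder α)
    (X Xp Xm : Finset α)
    (hpcard : Xp.card ≤ 1)
    (hmcard : Xm.card ≤ 1)
    (X' : Finset α) (hX' : X' = (X \ Xm) ∪ Xp) :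
    ∀ w : List Bool,
      (cell r 1 w X \ cell r 1 w X').card ≤ 1 ∧
      (cell r 1 w X' \ cell r 1 w X).card ≤ 1 := by
  subst hX'
  have hremoved : #(X \ (X \ Xm ∪ Xp)) ≤ 1 :=
    (card_le_card fun x => by simp only [mem_sdiff, mem_union]; tauto).trans hmcard
  have hadded : #((X \ Xm ∪ Xp) \ X) ≤ 1 :=
    (card_le_card fun x => by simp only [mem_sdiff, mem_union]; tauto).trans hpcard
  exact fun w =>
    ⟨card_cell_sdiff_le r w 1 hremoved hadded, card_cell_sdiff_le r w 1 hadded hremoved⟩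

theorem kd_tree_stability {α : Type*} [DecidableEq α]
    (r : ℕ → LinearOrder α)
    (X Xp Xm : Finset α)
    (hpcard : Xp.card ≤ 1) (hpdisj : Xp ∩ X = ∅)
    (hmsub : Xm ⊆ X) (hmcard : Xm.card ≤ 1)
    (X' : Finset α) (hX' : X' = (X \ Xm) ∪ Xp) :
    ∀ w : List Bool,
      (cell r 1 w X \ cell r 1 w X').card ≤ 1 ∧
      (cell r 1 w X' \ cell r 1 w X).card ≤ 1 :=
  kd_tree_stability_general r X Xp Xm hpcard hmcard X' hX'
end
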